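/- The composition q ∘ α : V → X is continuous, injective, its range is exactly X ∖ q(E), and it is a local homeomorphism. -/

import Mathlib

noncomputable section

/-- The 2-sphere, realized as the unit sphere `{(c,z) : |c|² + z² = 1}` in `ℂ × ℝ`,
with the subspace topology. -/
def TwoSphere : Set (ℂ × ℝ) := {p | ‖p.1‖ ^ 2 + p.2 ^ 2 = 1}

/-- The relation `r₀` on `S²`: `r₀ (c,z) (c',z')` iff `z ≠ 0`, `c' = -c` and `z' = z`. -/
def sphRel (a b : TwoSphere) : Prop :=
  a.1.2 ≠ 0 ∧ b.1.1 = -a.1.1 ∧ b.1.2 = a.1.2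

/-- The twisted sphere `X`: the quotient of `S²` by the equivalence relation generated
by `r₀`, with the quotient topology. -/
abbrev TwistedSphere : Type := Quot (Relation.EqvGen sphRel)

/-- The quotient map `q : S² → X`. -/
abbrev sphQ : TwoSphere → TwistedSphere := Quot.mk (Relation.EqvGen sphRel)

/-- `V = S² ∖ E`: the points of the sphere whose `ℝ`-coordinate is nonzero
(the sphere minus the equator). -/
def sphV : Set TwoSphere := {p | p.1.2 ≠ 0}

/-- The (discontinuous) "angle halving" map `α : V → S²`,
`α(c,z) = (√|c| · c^{1/2}, z)` where `c^{1/2}` is the principal complex square root.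
It fixes the two poles, where `c = 0`. -/
def sphAlpha (v : sphV) : TwoSphere :=
  ⟨((Real.sqrt ‖v.1.1.1‖ : ℂ) * v.1.1.1 ^ (1/2 : ℂ), v.1.1.2), by
    obtain ⟨⟨⟨c, z⟩, hmem⟩, -⟩ := v
    simp only [TwoSphere, Set.mem_setOf_eq] at hmem ⊢
    have h1 : ‖(Real.sqrt ‖c‖ : ℂ) * c ^ (1/2 : ℂ)‖
        = ‖c‖ := by
      rw [norm_mul, Complex.norm_of_nonneg (Real.sqrt_nonneg _)]
      have h2 : (1/2 : ℂ) = ((1/2 : ℝ) : ℂ) := by norm_num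
      rw [h2, Complex.norm_cpow_real, ← Real.sqrt_eq_rpow,
        Real.mul_self_sqrt (norm_nonneg _)]
    rw [h1, hmem]⟩

/-- The equator `E = {(c,z) ∈ S² : z = 0}`, as a subset of `S²`. -/
def sphE : Set TwoSphere := {p | p.1.2 = 0}

/-!
The map `σ(c, z) = (c² / ‖c‖, z)` is continuous, even in `c`, and satisfies `σ ∘ α = id`, so it
descends to a continuous `σ̄ : X → S²` with `σ̄ ∘ (q ∘ α) = id`. Conversely `α ∘ σ` agrees with
the identity up to the sign of `c`, so `q ∘ α ∘ σ = q` on `V`. Hence `q ∘ α` is injective with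
range `q(V) = X ∖ q(E)`, and it maps an open `U ⊆ V` onto the open set `σ̄⁻¹(U)`: it is an open
embedding. It is continuous because `α` is continuous off the negative real axis of `c`, and
across that axis it jumps to `-α`, which `q` does not see.
-/

open Topology

namespace Complex

/-- `r e^{iθ} ↦ r e^{iθ/2}` for `-π < θ ≤ π`. -/
def halveArg (c : ℂ) : ℂ := (Real.sqrt ‖c‖ : ℂ) * c ^ (1/2 : ℂ)

/-- `r e^{iθ} ↦ r e^{2iθ}`; at `0` the junk value `0 / 0 = 0` is the right one. -/
def doubleArg (c : ℂ) : ℂ := c ^ 2 / (‖c‖ : ℂ)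

lemma norm_halveArg (c : ℂ) : ‖halveArg c‖ = ‖c‖ := by
  rw [halveArg, norm_mul, Complex.norm_of_nonneg (Real.sqrt_nonneg _),
    show (1/2 : ℂ) = ((1/2 : ℝ) : ℂ) by norm_num, norm_cpow_real, ← Real.sqrt_eq_rpow,
    Real.mul_self_sqrt (norm_nonneg _)]

lemma halveArg_sq (c : ℂ) : halveArg c ^ 2 = ‖c‖ * c := by
  rw [halveArg, mul_pow, one_div, cpow_ofNat_inv_pow, ← ofReal_pow,
    Real.sq_sqrt (norm_nonneg _)]

lemma halveArg_zero : halveArg 0 = 0 := by simp [halveArg]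

lemma norm_doubleArg (c : ℂ) : ‖doubleArg c‖ = ‖c‖ := by
  rcases eq_or_ne c 0 with rfl | hc
  · simp [doubleArg]
  · rw [doubleArg, norm_div, norm_pow, Complex.norm_of_nonneg (norm_nonneg _), sq,
      mul_div_cancel_right₀ _ (norm_ne_zero_iff.mpr hc)]

lemma doubleArg_neg (c : ℂ) : doubleArg (-c) = doubleArg c := by
  simp [doubleArg]

lemma doubleArg_halveArg (c : ℂ) : doubleArg (halveArg c) = c := by
  rcases eq_or_ne c 0 with rfl | hc
  · simp [doubleArg, halveArg_zero]
  · rw [doubleArg, halveArg_sq, norm_halveArg,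
      mul_div_cancel_left₀ _ (ofReal_ne_zero.mpr (norm_ne_zero_iff.mpr hc))]

lemma halveArg_doubleArg (c : ℂ) : halveArg (doubleArg c) = c ∨ halveArg (doubleArg c) = -c := by
  refine (Commute.all _ _).sq_eq_sq_iff_eq_or_eq_neg.mp ?_
  rcases eq_or_ne c 0 with rfl | hc
  · simp [doubleArg, halveArg_zero]
  · rw [halveArg_sq, norm_doubleArg, doubleArg,
      mul_div_cancel₀ _ (ofReal_ne_zero.mpr (norm_ne_zero_iff.mpr hc))]

lemma continuous_doubleArg : Continuous doubleArg := by
  refine continuous_iff_continuousAt.mpr fun c => ?_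
  rcases eq_or_ne c 0 with rfl | hc
  · rw [ContinuousAt, show doubleArg 0 = 0 by simp [doubleArg], tendsto_zero_iff_norm_tendsto_zero]
    simpa only [norm_doubleArg, norm_zero] using continuous_norm.tendsto (0 : ℂ)
  · exact (continuous_pow 2).continuousAt.div (continuous_ofReal.comp continuous_norm).continuousAt
      (ofReal_ne_zero.mpr (norm_ne_zero_iff.mpr hc))

lemma continuousAt_halveArg_zero : ContinuousAt halveArg 0 := by
  rw [ContinuousAt, halveArg_zero, tendsto_zero_iff_norm_tendsto_zero]
  simpa only [norm_halveArg, norm_zero] using continuous_norm.tendsto (0 : ℂ)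

lemma continuousAt_halveArg {c : ℂ} (hc : c ∈ slitPlane) : ContinuousAt halveArg c :=
  (continuous_ofReal.comp (Real.continuous_sqrt.comp continuous_norm)).continuousAt.mul
    (continuousAt_cpow_const hc)

/-- Across the negative real axis `halveArg` jumps to its negative; `I * halveArg (-w)` is a
branch that is continuous there. -/
lemma exists_continuousAt_eq_halveArg_or_neg (c : ℂ) :
    ∃ g : ℂ → ℂ, ContinuousAt g c ∧ ∀ w, g w = halveArg w ∨ g w = -halveArg w := by
  rcases eq_or_ne c 0 with rfl | hc
  · exact ⟨halveArg, continuousAt_halveArg_zero, fun _ => Or.inl rfl⟩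
  rcases mem_slitPlane_or_neg_mem_slitPlane hc with hslit | hslit
  · exact ⟨halveArg, continuousAt_halveArg hslit, fun _ => Or.inl rfl⟩
  refine ⟨fun w => I * halveArg (-w),
    continuousAt_const.mul ((continuousAt_halveArg hslit).comp continuousAt_neg), fun w => ?_⟩
  refine (Commute.all _ _).sq_eq_sq_iff_eq_or_eq_neg.mp ?_
  rw [mul_pow, halveArg_sq, halveArg_sq, I_sq, norm_neg]
  ring

end Complex

open Complex

def sphMapFst (f : ℂ → ℂ) (hf : ∀ c, ‖f c‖ = ‖c‖) (p : TwoSphere) : TwoSphere :=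
  ⟨(f p.1.1, p.1.2), by simpa only [TwoSphere, Set.mem_ofPred_eq, hf] using p.2⟩

lemma continuousAt_sphMapFst {f : ℂ → ℂ} (hf : ∀ c, ‖f c‖ = ‖c‖) {p : TwoSphere}
    (hfp : ContinuousAt f p.1.1) : ContinuousAt (sphMapFst f hf) p := by
  have hfst : ContinuousAt (fun p : TwoSphere => f p.1.1) p :=
    hfp.comp (f := fun p : TwoSphere => p.1.1) continuous_subtype_val.fst.continuousAt
  exact IsInducing.subtypeVal.continuousAt_iff.mpr
    (hfst.prodMk continuous_subtype_val.snd.continuousAt)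

lemma continuous_sphMapFst {f : ℂ → ℂ} (hf : ∀ c, ‖f c‖ = ‖c‖) (hfc : Continuous f) :
    Continuous (sphMapFst f hf) :=
  continuous_iff_continuousAt.mpr fun _ => continuousAt_sphMapFst hf hfc.continuousAt

lemma sphQ_eq_sphQ_iff {a b : TwoSphere} : sphQ a = sphQ b ↔ a = b ∨ sphRel a b := by
  have hequiv : Equivalence fun a b : TwoSphere => a = b ∨ sphRel a b := by
    refine ⟨fun _ => Or.inl rfl, ?_, ?_⟩
    · rintro a b (rfl | ⟨hz, hc, hzz⟩)
      · exact Or.inl rfl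
      · exact Or.inr ⟨hzz ▸ hz, by rw [hc, neg_neg], hzz.symm⟩
    · rintro a b c (rfl | ⟨hz, hc, hzz⟩) (rfl | ⟨hz', hc', hzz'⟩)
      · exact Or.inl rfl
      · exact Or.inr ⟨hz', hc', hzz'⟩
      · exact Or.inr ⟨hz, hc, hzz⟩
      · exact Or.inl (Subtype.ext (Prod.ext (by rw [hc', hc, neg_neg]) (hzz'.trans hzz)).symm)
  refine ⟨fun h => hequiv.eqvGen_iff.mp ?_, fun h => Quot.sound ?_⟩
  · have hgen := (Relation.EqvGen.is_equivalence sphRel).eqvGen_iff.mp (Quot.eqvGen_exact h)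
    exact Relation.EqvGen.mono (fun _ _ => Or.inr) _ _ hgen
  · rcases h with rfl | h
    · exact .refl a
    · exact .rel _ _ h

lemma sphQ_eq_sphQ_of_fst_eq_or_eq_neg {a b : TwoSphere} (ha : a.1.2 ≠ 0) (hz : b.1.2 = a.1.2)
    (hc : b.1.1 = a.1.1 ∨ b.1.1 = -a.1.1) : sphQ a = sphQ b := by
  rcases hc with hc | hc
  · rw [Subtype.ext (Prod.ext hc hz)]
  · exact sphQ_eq_sphQ_iff.mpr (Or.inr ⟨ha, hc, hz⟩)

lemma isOpen_sphV : IsOpen sphV :=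
  isOpen_ne_fun continuous_subtype_val.snd continuous_const

lemma continuous_sphQ_sphAlpha : Continuous fun v : sphV => sphQ (sphAlpha v) := by
  refine continuous_iff_continuousAt.mpr fun v => ?_
  obtain ⟨g, hgc, hg⟩ := exists_continuousAt_eq_halveArg_or_neg v.1.1.1
  have hg_norm (c : ℂ) : ‖g c‖ = ‖c‖ := by
    rcases hg c with h | h <;> rw [h, ← norm_halveArg c]
    exact norm_neg _
  have hfun :
      (fun v : sphV => sphQ (sphAlpha v)) = fun v : sphV => sphQ (sphMapFst g hg_norm v) :=
    funext fun w => sphQ_eq_sphQ_of_fst_eq_or_eq_neg w.2 rfl (hg w.1.1.1)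
  rw [hfun]
  exact continuous_quot_mk.continuousAt.comp
    ((continuousAt_sphMapFst hg_norm hgc).comp continuous_subtype_val.continuousAt)

def sphSigma : TwoSphere → TwoSphere := sphMapFst doubleArg norm_doubleArg

lemma sphSigma_sphAlpha (v : sphV) : sphSigma (sphAlpha v) = v :=
  Subtype.ext (Prod.ext (doubleArg_halveArg _) rfl)

lemma sphQ_sphAlpha_sphSigma {p : TwoSphere} (hp : p ∈ sphV) :
    sphQ (sphAlpha ⟨sphSigma p, hp⟩) = sphQ p :=
  (sphQ_eq_sphQ_of_fst_eq_or_eq_neg (b := sphAlpha ⟨sphSigma p, hp⟩) hp rfl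
    (halveArg_doubleArg _)).symm

def twistedSigma : TwistedSphere → TwoSphere :=
  Quot.lift sphSigma fun a b h => by
    rcases sphQ_eq_sphQ_iff.mp (Quot.sound h) with rfl | ⟨-, hc, hz⟩
    · rfl
    · exact Subtype.ext (Prod.ext (by simp only [sphSigma, sphMapFst, hc, doubleArg_neg]) hz.symm)

lemma continuous_twistedSigma : Continuous twistedSigma :=
  continuous_quot_lift _ (continuous_sphMapFst norm_doubleArg continuous_doubleArg)

lemma twistedSigma_sphQ_sphAlpha (v : sphV) : twistedSigma (sphQ (sphAlpha v)) = v :=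
  sphSigma_sphAlpha v

lemma image_sphQ_sphAlpha (U : Set sphV) :
    (fun v : sphV => sphQ (sphAlpha v)) '' U = twistedSigma ⁻¹' (Subtype.val '' U) := by
  ext x
  constructor
  · rintro ⟨u, hu, rfl⟩
    exact ⟨u, hu, (twistedSigma_sphQ_sphAlpha u).symm⟩
  · obtain ⟨p, rfl⟩ := Quot.exists_rep x
    rintro ⟨u, hu, hup⟩
    have hp : p ∈ sphV := (hup ▸ u.2 : twistedSigma (sphQ p) ∈ sphV)
    refine ⟨u, hu, ?_⟩
    show sphQ (sphAlpha u) = sphQ p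
    rw [← sphQ_sphAlpha_sphSigma hp]
    congr
    exact Subtype.ext hup

lemma isOpenMap_sphQ_sphAlpha : IsOpenMap fun v : sphV => sphQ (sphAlpha v) := fun U hU => by
  rw [image_sphQ_sphAlpha]
  exact continuous_twistedSigma.isOpen_preimage _ (isOpen_sphV.isOpenMap_subtype_val U hU)

lemma range_sphQ_sphAlpha :
    Set.range (fun v : sphV => sphQ (sphAlpha v)) = Set.univ \ (sphQ '' sphE) := by
  rw [← Set.image_univ, image_sphQ_sphAlpha, Set.image_univ, Subtype.range_coe]
  ext x
  obtain ⟨p, rfl⟩ := Quot.exists_rep x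
  simp only [Set.mem_preimage, Set.mem_sdiff, Set.mem_univ, true_and, Set.mem_image, not_exists,
    not_and]
  refine ⟨fun hp e he hep => hp ?_, fun h hp => h p hp rfl⟩
  exact congrArg (fun x => (twistedSigma x).1.2) hep ▸ he

lemma injective_sphQ_sphAlpha : Function.Injective fun v : sphV => sphQ (sphAlpha v) := by
  have hcomp : twistedSigma ∘ (fun v : sphV => sphQ (sphAlpha v)) = Subtype.val :=
    funext twistedSigma_sphQ_sphAlpha
  exact .of_comp (hcomp ▸ Subtype.val_injective)

/-- the composition `q ∘ α : V → X` is continuous, injective, its range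
is exactly `X ∖ q(E)`, and it is a local homeomorphism. -/
theorem stmt_10 :
    Continuous (fun v : sphV => sphQ (sphAlpha v)) ∧
    Function.Injective (fun v : sphV => sphQ (sphAlpha v)) ∧
    Set.range (fun v : sphV => sphQ (sphAlpha v)) = Set.univ \ (sphQ '' sphE) ∧
    IsLocalHomeomorph (fun v : sphV => sphQ (sphAlpha v)) := by
  refine ⟨continuous_sphQ_sphAlpha, injective_sphQ_sphAlpha, range_sphQ_sphAlpha, ?_⟩
  exact (IsOpenEmbedding.of_continuous_injective_isOpenMap continuous_sphQ_sphAlpha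
    injective_sphQ_sphAlpha isOpenMap_sphQ_sphAlpha).isLocalHomeomorph
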